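/- Under the structured RIP with δ_P, δ_{2P} < 1, for block-index sets Ω̂ and Ω_T each of cardinality ≤ P, if D is supported on Ω_T then ‖Ψ_{Ω̂}^† Ψ_{Ω_T∖Ω̂} D_{Ω_T∖Ω̂}‖_F ≤ (δ_{2P}/(1−δ_P)) ‖D_{Ω_T∖Ω̂}‖_F. -/

import Mathlib

open scoped BigOperators
open Matrix
noncomputable section

variable {Np M L R : ℕ}

/-- Frobenius norm of a complex matrix. -/
def frob {m n : Type*} [Fintype m] [Fintype n] (A : Matrix m n ℂ) : ℝ :=
  Real.sqrt (∑ i, ∑ j, ‖A i j‖ ^ 2)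

/-- `D` is block-supported on the block-index set `Ω`. -/
def SuppOn (Ω : Finset (Fin L)) (D : Matrix (Fin L × Fin M) (Fin R) ℂ) : Prop :=
  ∀ p r, p.1 ∉ Ω → D p r = 0

/-- Column-block submatrix `Ψ_Ω` of `Ψ`. -/
def bsub (Ψ : Matrix (Fin Np) (Fin L × Fin M) ℂ) (Ω : Finset (Fin L)) :
    Matrix (Fin Np) ({l // l ∈ Ω} × Fin M) ℂ :=
  Ψ.submatrix id (fun q => ((q.1 : Fin L), q.2))

/-- Row-block submatrix `D_Ω` of `D`. -/
def rsub (D : Matrix (Fin L × Fin M) (Fin R) ℂ) (Ω : Finset (Fin L)) :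
    Matrix ({l // l ∈ Ω} × Fin M) (Fin R) ℂ :=
  D.submatrix (fun q => ((q.1 : Fin L), q.2)) id

/-- Moore–Penrose pseudoinverse `Ψ_Ω^† = (Ψ_Ωᴴ Ψ_Ω)⁻¹ Ψ_Ωᴴ` of the column-block submatrix. -/
def bpinv (Ψ : Matrix (Fin Np) (Fin L × Fin M) ℂ) (Ω : Finset (Fin L)) :
    Matrix ({l // l ∈ Ω} × Fin M) (Fin Np) ℂ :=
  ((bsub Ψ Ω)ᴴ * bsub Ψ Ω)⁻¹ * (bsub Ψ Ω)ᴴ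

/-- Re-embed a matrix indexed by the blocks of `Ω` as a full `ML × R` matrix, zero outside `Ω`. -/
def expand (Ω : Finset (Fin L)) (X : Matrix ({l // l ∈ Ω} × Fin M) (Fin R) ℂ) :
    Matrix (Fin L × Fin M) (Fin R) ℂ :=
  fun p r => if h : p.1 ∈ Ω then X (⟨p.1, h⟩, p.2) r else 0

/-- Structured (block) RIP of order `P` with constant `δ`. -/
def SRIP (Ψ : Matrix (Fin Np) (Fin L × Fin M) ℂ) (P : ℕ) (δ : ℝ) : Prop :=
  ∀ Ω : Finset (Fin L), Ω.card ≤ P →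
    ∀ D : Matrix (Fin L × Fin M) (Fin R) ℂ, SuppOn Ω D →
      (1 - δ) * frob D ^ 2 ≤ frob (Ψ * D) ^ 2 ∧ frob (Ψ * D) ^ 2 ≤ (1 + δ) * frob D ^ 2

/-! Put `Ω₂ = Ω_T ∖ Ω̂` and `Z = Ψ_{Ω̂}^† Ψ_{Ω₂} D_{Ω₂}`. Since `Ψ_{Ω̂} Z` is the orthogonal
projection of `Ψ_{Ω₂} D_{Ω₂}` onto the range of `Ψ_{Ω̂}`, we have
`‖Ψ_{Ω̂} Z‖² = Re⟪Ψ_{Ω̂} Z, Ψ_{Ω₂} D_{Ω₂}⟫`. The RIP of order `P` bounds the left side below by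
`(1 - δ_P) ‖Z‖²`; the RIP of order `2P`, through polarization, makes `Ψ` nearly isometric on
the disjoint blocks `Ω̂, Ω₂` and bounds the right side by `δ_{2P} ‖Z‖ ‖D_{Ω₂}‖`. -/

section FrobeniusInner

variable {m n k : Type*} [Fintype m] [Fintype n] [Fintype k]

def frobInner (X Y : Matrix m n ℂ) : ℝ :=
  (trace (Xᴴ * Y)).re

lemma frobInner_self (X : Matrix m n ℂ) : frobInner X X = frob X ^ 2 := by
  rw [frob, Real.sq_sqrt (by positivity)]
  simp only [frobInner, trace, diag, mul_apply, conjTranspose_apply, Complex.re_sum]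
  rw [Finset.sum_comm]
  refine Finset.sum_congr rfl fun i _ => Finset.sum_congr rfl fun j _ => ?_
  rw [Complex.star_def, mul_comm, Complex.mul_conj, Complex.ofReal_re, Complex.normSq_eq_norm_sq]

lemma frob_nonneg (X : Matrix m n ℂ) : 0 ≤ frob X :=
  Real.sqrt_nonneg _

lemma frob_eq_zero {X : Matrix m n ℂ} : frob X = 0 ↔ X = 0 := by
  rw [frob, Real.sqrt_eq_zero (by positivity),
    Finset.sum_eq_zero_iff_of_nonneg fun _ _ => by positivity]
  simp [Finset.sum_eq_zero_iff_of_nonneg, ← Matrix.ext_iff]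

lemma frobInner_comm (X Y : Matrix m n ℂ) : frobInner X Y = frobInner Y X := by
  rw [frobInner, frobInner, ← conjTranspose_conjTranspose X, ← conjTranspose_mul,
    trace_conjTranspose, conjTranspose_conjTranspose, Complex.star_def, Complex.conj_re]

lemma frobInner_mul_left (A : Matrix k m ℂ) (X : Matrix m n ℂ) (Y : Matrix k n ℂ) :
    frobInner (A * X) Y = frobInner X (Aᴴ * Y) := by
  simp [frobInner, conjTranspose_mul, Matrix.mul_assoc]

lemma frobInner_smul_left (c : ℝ) (X Y : Matrix m n ℂ) :
    frobInner ((c : ℂ) • X) Y = c * frobInner X Y := by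
  simp [frobInner, conjTranspose_smul, trace_smul]

lemma frobInner_smul_right (c : ℝ) (X Y : Matrix m n ℂ) :
    frobInner X ((c : ℂ) • Y) = c * frobInner X Y := by
  rw [frobInner_comm, frobInner_smul_left, frobInner_comm]

lemma frob_add_sq (X Y : Matrix m n ℂ) :
    frob (X + Y) ^ 2 = frob X ^ 2 + 2 * frobInner X Y + frob Y ^ 2 := by
  have hYX := frobInner_comm Y X
  simp only [← frobInner_self, frobInner, conjTranspose_add, Matrix.add_mul, Matrix.mul_add,
    trace_add, Complex.add_re] at hYX ⊢
  linarith

lemma frob_sub_sq (X Y : Matrix m n ℂ) :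
    frob (X - Y) ^ 2 = frob X ^ 2 - 2 * frobInner X Y + frob Y ^ 2 := by
  have hYX := frobInner_comm Y X
  simp only [← frobInner_self, frobInner, conjTranspose_sub, Matrix.sub_mul, Matrix.mul_sub,
    trace_sub, Complex.sub_re] at hYX ⊢
  linarith

lemma frob_smul_sq (c : ℝ) (X : Matrix m n ℂ) : frob ((c : ℂ) • X) ^ 2 = c ^ 2 * frob X ^ 2 := by
  rw [← frobInner_self, ← frobInner_self, frobInner_smul_left, frobInner_smul_right]
  ring

/-- When `Aᴴ A` is singular its junk inverse is `0`, so both sides vanish. -/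
lemma frob_mul_pinv_mul_sq [DecidableEq n] (A : Matrix m n ℂ) (B : Matrix m k ℂ) :
    frob (A * ((Aᴴ * A)⁻¹ * Aᴴ * B)) ^ 2 = frobInner (A * ((Aᴴ * A)⁻¹ * Aᴴ * B)) B := by
  set Z := (Aᴴ * A)⁻¹ * Aᴴ * B with hZ
  rw [← frobInner_self, frobInner_mul_left, frobInner_mul_left A Z]
  by_cases hG : IsUnit (Aᴴ * A).det
  · have hnormal : Aᴴ * A * Z = Aᴴ * B := by
      rw [hZ, Matrix.mul_assoc _ Aᴴ B, mul_nonsing_inv_cancel_left _ _ hG]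
    rw [← Matrix.mul_assoc, hnormal]
  · simp [Z, nonsing_inv_apply_not_isUnit _ hG, frobInner]

end FrobeniusInner

section Blocks

lemma SuppOn.add {Ω : Finset (Fin L)} {D₁ D₂ : Matrix (Fin L × Fin M) (Fin R) ℂ}
    (h₁ : SuppOn Ω D₁) (h₂ : SuppOn Ω D₂) : SuppOn Ω (D₁ + D₂) := fun p r hp => by
  simp [h₁ p r hp, h₂ p r hp]

lemma SuppOn.sub {Ω : Finset (Fin L)} {D₁ D₂ : Matrix (Fin L × Fin M) (Fin R) ℂ}
    (h₁ : SuppOn Ω D₁) (h₂ : SuppOn Ω D₂) : SuppOn Ω (D₁ - D₂) := fun p r hp => by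
  simp [h₁ p r hp, h₂ p r hp]

lemma SuppOn.smul {Ω : Finset (Fin L)} {D : Matrix (Fin L × Fin M) (Fin R) ℂ}
    (h : SuppOn Ω D) (c : ℂ) : SuppOn Ω (c • D) := fun p r hp => by
  simp [h p r hp]

lemma suppOn_expand {Ω Ω' : Finset (Fin L)} (h : Ω ⊆ Ω')
    (X : Matrix ({l // l ∈ Ω} × Fin M) (Fin R) ℂ) : SuppOn Ω' (expand Ω X) := fun _ _ hp =>
  dif_neg fun hΩ => hp (h hΩ)

lemma sum_eq_sum_blocks_of_vanishing {γ : Type*} [AddCommMonoid γ] (Ω : Finset (Fin L))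
    (f : Fin L × Fin M → γ) (hf : ∀ p, p.1 ∉ Ω → f p = 0) :
    ∑ p, f p = ∑ q : {l // l ∈ Ω} × Fin M, f (q.1, q.2) := by
  rw [Fintype.sum_prod_type, Fintype.sum_prod_type,
    ← Finset.sum_subset (Finset.subset_univ Ω)
      (fun l _ hl => Finset.sum_eq_zero fun m _ => hf (l, m) hl)]
  exact Finset.sum_subtype Ω (fun _ => Iff.rfl) _

lemma mul_expand (Ψ : Matrix (Fin Np) (Fin L × Fin M) ℂ) (Ω : Finset (Fin L))
    (X : Matrix ({l // l ∈ Ω} × Fin M) (Fin R) ℂ) : Ψ * expand Ω X = bsub Ψ Ω * X := by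
  ext i r
  rw [mul_apply, mul_apply, sum_eq_sum_blocks_of_vanishing Ω _ fun p hp => by simp [expand, hp]]
  simp [bsub, expand]

lemma frob_expand (Ω : Finset (Fin L)) (X : Matrix ({l // l ∈ Ω} × Fin M) (Fin R) ℂ) :
    frob (expand Ω X) = frob X := by
  rw [frob, frob, sum_eq_sum_blocks_of_vanishing Ω _ fun p hp => by simp [expand, hp]]
  simp [expand]

lemma frobInner_expand_of_disjoint {Ω₁ Ω₂ : Finset (Fin L)} (h : Disjoint Ω₁ Ω₂)
    (X : Matrix ({l // l ∈ Ω₁} × Fin M) (Fin R) ℂ) (Y : Matrix ({l // l ∈ Ω₂} × Fin M) (Fin R) ℂ) :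
    frobInner (expand Ω₁ X) (expand Ω₂ Y) = 0 := by
  have hzero : (expand Ω₁ X)ᴴ * expand Ω₂ Y = 0 := by
    ext j r
    refine Finset.sum_eq_zero fun p _ => ?_
    by_cases hp : p.1 ∈ Ω₁
    · simp [expand, Finset.disjoint_left.mp h hp]
    · simp [expand, hp]
  simp [frobInner, hzero]

end Blocks

namespace SRIP

variable {Ψ : Matrix (Fin Np) (Fin L × Fin M) ℂ} {P : ℕ} {δ : ℝ} {Ω : Finset (Fin L)}

lemma mul_frob_nonneg (hΨ : SRIP (R := R) Ψ P δ) (hΩ : Ω.card ≤ P)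
    {D : Matrix (Fin L × Fin M) (Fin R) ℂ} (hD : SuppOn Ω D) : 0 ≤ δ * frob D := by
  obtain ⟨hlow, hup⟩ := hΨ Ω hΩ D hD
  rcases (frob_nonneg D).eq_or_lt with h0 | hpos
  · simp [← h0]
  · nlinarith

/-- Polarization: `4 Re⟪ΨD₁, ΨD₂⟫ = ‖Ψ(D₁ + D₂)‖² - ‖Ψ(D₁ - D₂)‖²`, and for orthogonal `D₁, D₂`
both `D₁ ± D₂` have squared norm `‖D₁‖² + ‖D₂‖²`. -/
lemma frobInner_le_half (hΨ : SRIP (R := R) Ψ P δ) (hΩ : Ω.card ≤ P)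
    {D₁ D₂ : Matrix (Fin L × Fin M) (Fin R) ℂ} (h₁ : SuppOn Ω D₁) (h₂ : SuppOn Ω D₂)
    (horth : frobInner D₁ D₂ = 0) :
    frobInner (Ψ * D₁) (Ψ * D₂) ≤ δ / 2 * (frob D₁ ^ 2 + frob D₂ ^ 2) := by
  have hadd := (hΨ Ω hΩ _ (h₁.add h₂)).2
  have hsub := (hΨ Ω hΩ _ (h₁.sub h₂)).1
  rw [Matrix.mul_add, frob_add_sq, frob_add_sq, horth] at hadd
  rw [Matrix.mul_sub, frob_sub_sq, frob_sub_sq, horth] at hsub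
  linarith

/-- The scaling `D₁ ↦ ‖D₂‖ D₁`, `D₂ ↦ ‖D₁‖ D₂` turns the arithmetic mean into the geometric one. -/
lemma frobInner_le (hΨ : SRIP (R := R) Ψ P δ) (hΩ : Ω.card ≤ P)
    {D₁ D₂ : Matrix (Fin L × Fin M) (Fin R) ℂ} (h₁ : SuppOn Ω D₁) (h₂ : SuppOn Ω D₂)
    (horth : frobInner D₁ D₂ = 0) :
    frobInner (Ψ * D₁) (Ψ * D₂) ≤ δ * frob D₁ * frob D₂ := by
  rcases (frob_nonneg D₁).eq_or_lt with ha0 | ha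
  · obtain rfl := frob_eq_zero.mp ha0.symm
    simp [← ha0, frobInner]
  rcases (frob_nonneg D₂).eq_or_lt with hb0 | hb
  · obtain rfl := frob_eq_zero.mp hb0.symm
    simp [← hb0, frobInner]
  have hscaled := hΨ.frobInner_le_half hΩ (h₁.smul (frob D₂ : ℂ)) (h₂.smul (frob D₁ : ℂ))
    (by rw [frobInner_smul_left, frobInner_smul_right, horth, mul_zero, mul_zero])
  rw [Matrix.mul_smul, Matrix.mul_smul, frobInner_smul_left, frobInner_smul_right, frob_smul_sq,
    frob_smul_sq] at hscaled
  have hab := mul_pos ha hb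
  nlinarith

lemma sq_frob_le_bsub (hΨ : SRIP (R := R) Ψ P δ) (hΩ : Ω.card ≤ P)
    (X : Matrix ({l // l ∈ Ω} × Fin M) (Fin R) ℂ) :
    (1 - δ) * frob X ^ 2 ≤ frob (bsub Ψ Ω * X) ^ 2 := by
  simpa [mul_expand, frob_expand] using (hΨ Ω hΩ _ (suppOn_expand subset_rfl X)).1

lemma mul_frob_nonneg_of_block (hΨ : SRIP (R := R) Ψ P δ) (hΩ : Ω.card ≤ P)
    (X : Matrix ({l // l ∈ Ω} × Fin M) (Fin R) ℂ) : 0 ≤ δ * frob X := by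
  simpa [frob_expand] using hΨ.mul_frob_nonneg hΩ (suppOn_expand subset_rfl X)

lemma frobInner_bsub_le (hΨ : SRIP (R := R) Ψ P δ) {Ω₁ Ω₂ : Finset (Fin L)}
    (hdisj : Disjoint Ω₁ Ω₂) (hcard : (Ω₁ ∪ Ω₂).card ≤ P)
    (X : Matrix ({l // l ∈ Ω₁} × Fin M) (Fin R) ℂ) (Y : Matrix ({l // l ∈ Ω₂} × Fin M) (Fin R) ℂ) :
    frobInner (bsub Ψ Ω₁ * X) (bsub Ψ Ω₂ * Y) ≤ δ * frob X * frob Y := by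
  simpa [mul_expand, frob_expand] using
    hΨ.frobInner_le hcard (suppOn_expand Finset.subset_union_left X)
      (suppOn_expand Finset.subset_union_right Y) (frobInner_expand_of_disjoint hdisj X Y)

end SRIP

theorem srip_pinv_cross_bound_general
    (Ψ : Matrix (Fin Np) (Fin L × Fin M) ℂ) (P : ℕ) (δP δ2P : ℝ)
    (hRIP_P : SRIP (R := R) Ψ P δP) (hRIP_2P : SRIP (R := R) Ψ (2 * P) δ2P)
    (hδP : δP < 1)
    (Ωhat ΩT : Finset (Fin L)) (hc1 : Ωhat.card ≤ P) (hc2 : ΩT.card ≤ P)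
    (D : Matrix (Fin L × Fin M) (Fin R) ℂ) :
    frob (bpinv Ψ Ωhat * (bsub Ψ (ΩT \ Ωhat) * rsub D (ΩT \ Ωhat))) ≤
      (δ2P / (1 - δP)) * frob (rsub D (ΩT \ Ωhat)) := by
  set E := rsub D (ΩT \ Ωhat)
  set Z := bpinv Ψ Ωhat * (bsub Ψ (ΩT \ Ωhat) * E)
  have hsdiff : (ΩT \ Ωhat).card ≤ P := (Finset.card_le_card Finset.sdiff_subset).trans hc2
  have hunion : (Ωhat ∪ ΩT \ Ωhat).card ≤ 2 * P := by
    have := Finset.card_union_le Ωhat (ΩT \ Ωhat)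
    omega
  have hlower := hRIP_P.sq_frob_le_bsub hc1 Z
  have hproj : frob (bsub Ψ Ωhat * Z) ^ 2 = frobInner (bsub Ψ Ωhat * Z) (bsub Ψ (ΩT \ Ωhat) * E) :=
    frob_mul_pinv_mul_sq _ _
  have hcross := hRIP_2P.frobInner_bsub_le disjoint_sdiff_self_right hunion Z E
  have hnonneg := hRIP_2P.mul_frob_nonneg_of_block (by omega) E
  rw [div_mul_eq_mul_div, le_div_iff₀ (sub_pos.2 hδP)]
  nlinarith [frob_nonneg Z]

/-- `‖Ψ_{Ω̂}^† Ψ_{Ω_T∖Ω̂} D_{Ω_T∖Ω̂}‖_F ≤ (δ_{2P}/(1−δ_P)) ‖D_{Ω_T∖Ω̂}‖_F`. -/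
theorem srip_pinv_cross_bound
    (Ψ : Matrix (Fin Np) (Fin L × Fin M) ℂ) (P : ℕ) (δP δ2P : ℝ)
    (hRIP_P : SRIP (R := R) Ψ P δP) (hRIP_2P : SRIP (R := R) Ψ (2 * P) δ2P)
    (hδP : δP < 1) (hδ2P : δ2P < 1)
    (Ωhat ΩT : Finset (Fin L)) (hc1 : Ωhat.card ≤ P) (hc2 : ΩT.card ≤ P)
    (D : Matrix (Fin L × Fin M) (Fin R) ℂ) (hD : SuppOn ΩT D) :
    frob (bpinv Ψ Ωhat * (bsub Ψ (ΩT \ Ωhat) * rsub D (ΩT \ Ωhat))) ≤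
      (δ2P / (1 - δP)) * frob (rsub D (ΩT \ Ωhat)) :=
  srip_pinv_cross_bound_general Ψ P δP δ2P hRIP_P hRIP_2P hδP Ωhat ΩT hc1 hc2 D
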